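/- If the conflict graph of an MSC μ that is a concatenation of exchanges is strongly connected, then μ is a prime exchange (it cannot be written as a concatenation of two non-empty exchanges). -/

import Mathlib

/-- Send/receive actions of a communicating system. -/
inductive Act (P V : Type) where
  | send (p q : P) (m : V)
  | recv (p q : P) (m : V)
deriving DecidableEq

namespace Act
variable {P V : Type}

/-- The process performing the action: `p` for a send `s^{p -> q}`, `q` for a receive. -/
def proc : Act P V → P
  | send p _ _ => p
  | recv _ q _ => q

def sender : Act P V → P
  | send p _ _ => p
  | recv p _ _ => p

def receiver : Act P V → P
  | send _ q _ => q
  | recv _ q _ => q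

def isSend : Act P V → Bool
  | send _ _ _ => true
  | recv _ _ _ => false

def isRecv : Act P V → Bool
  | send _ _ _ => false
  | recv _ _ _ => true

end Act
/-- A message sequence chart, given by a canonical linearization of its events
(`lab i` is the action of the `i`-th event) together with the matching relation `src`
between send events and receive events.  The process order `po` and the partial order
`(po ∪ src)^*` are derived from this data. -/
structure MSC (P V : Type) where
  n : ℕ
  lab : Fin n → Act P V
  src : Fin n → Fin n → Prop

namespace MSC
variable {P V : Type}

/-- Well-formedness: `src` goes forward from sends to receives with the same labels,
it is the graph of a bijection between a subset of the sends and all the receives. -/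
def WF (μ : MSC P V) : Prop :=
  (∀ i j, μ.src i j → i < j ∧ ∃ p q m, μ.lab i = .send p q m ∧ μ.lab j = .recv p q m) ∧
  (∀ i i' j, μ.src i j → μ.src i' j → i = i') ∧
  (∀ i j j', μ.src i j → μ.src i j' → j = j') ∧
  (∀ j, (μ.lab j).isRecv → ∃ i, μ.src i j)

/-- Process order: two events of the same process, in order. -/
def po (μ : MSC P V) (i j : Fin μ.n) : Prop :=
  i < j ∧ (μ.lab i).proc = (μ.lab j).proc

/-- `σ` enumerates the events (event `i` sits at position `σ.symm i`) in a way compatible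
with the partial order `(po ∪ src)^*`, i.e. it is a linearization of the MSC. -/
def IsLin (μ : MSC P V) (σ : Fin μ.n ≃ Fin μ.n) : Prop :=
  ∀ i j, (μ.po i j ∨ μ.src i j) → σ.symm i < σ.symm j

/-- An exchange: an MSC admitting a linearization in `S* R*`
(all sends before all receives). -/
def IsExchange (μ : MSC P V) : Prop :=
  ∃ σ : Fin μ.n ≃ Fin μ.n, μ.IsLin σ ∧
    ∀ a b : Fin μ.n, a ≤ b → (μ.lab (σ b)).isSend → (μ.lab (σ a)).isSend

/-- The size of an exchange: its number of send events. -/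
def size (μ : MSC P V) : ℕ :=
  (Finset.univ.filter (fun i : Fin μ.n => (μ.lab i).isSend = true)).card

/-- A `k`-exchange: at most `k` sends followed by at most `k` receives. -/
def IsKExchange (k : ℕ) (μ : MSC P V) : Prop :=
  μ.IsExchange ∧ μ.size ≤ k ∧ μ.n - μ.size ≤ k

/-- Concatenation of MSCs: all events of `μ₁` come before all events of `μ₂`
(in particular all `p`-events of `μ₁` precede all `p`-events of `μ₂`),
and the matching is the union of the two matchings. -/
def concat (μ₁ μ₂ : MSC P V) : MSC P V where
  n := μ₁.n + μ₂.n
  lab i :=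
    if h : i.val < μ₁.n then μ₁.lab ⟨i.val, h⟩
    else μ₂.lab ⟨i.val - μ₁.n, by have := i.isLt; omega⟩
  src i j :=
    (∃ (hi : i.val < μ₁.n) (hj : j.val < μ₁.n), μ₁.src ⟨i.val, hi⟩ ⟨j.val, hj⟩) ∨
    (∃ (_ : μ₁.n ≤ i.val) (_ : μ₁.n ≤ j.val),
      μ₂.src ⟨i.val - μ₁.n, by have := i.isLt; omega⟩ ⟨j.val - μ₁.n, by have := j.isLt; omega⟩)

/-- The empty MSC. -/
def empty : MSC P V := ⟨0, fun i => i.elim0, fun _ _ => False⟩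

/-- Concatenation `μ₁ ⬝ μ₂ ⬝ ⋯ ⬝ μₙ` of a list of MSCs. -/
def concatList (l : List (MSC P V)) : MSC P V := l.foldr concat empty

/-- Isomorphism of MSCs (equality of MSCs, which are considered up to renaming of events). -/
def Equiv (μ ν : MSC P V) : Prop :=
  ∃ f : Fin μ.n ≃ Fin ν.n,
    (∀ i, ν.lab (f i) = μ.lab i) ∧
    (∀ i j, ν.po (f i) (f j) ↔ μ.po i j) ∧
    (∀ i j, ν.src (f i) (f j) ↔ μ.src i j)

/-- The two kinds of events of a message: its send event `S` and its receive event `R`. -/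
inductive SR | S | R

/-- `evAt X v e`: event `e` is the `X`-event of the message (send event) `v`. -/
def evAt (μ : MSC P V) : SR → Fin μ.n → Fin μ.n → Prop
  | .S, v, e => e = v ∧ (μ.lab v).isSend
  | .R, v, e => μ.src v e

/-- `XY`-edge of the conflict graph: the `X`-event of `v` and the `Y`-event of `v'` exist,
and the former precedes the latter in the process order. -/
def cgEdge (μ : MSC P V) (X Y : SR) (v v' : Fin μ.n) : Prop :=
  ∃ e e', μ.evAt X v e ∧ μ.evAt Y v' e' ∧ μ.po e e'

/-- Edge of the conflict graph (for some labels `X Y`). -/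
def cg (μ : MSC P V) (v v' : Fin μ.n) : Prop := ∃ X Y, μ.cgEdge X Y v v'

/-- Two messages lie in the same strongly connected component of the conflict graph. -/
def SameSCC (μ : MSC P V) (v v' : Fin μ.n) : Prop :=
  Relation.ReflTransGen μ.cg v v' ∧ Relation.ReflTransGen μ.cg v' v

/-- A prime exchange: an exchange not decomposable as the concatenation of
two non-empty exchanges. -/
def Prime (μ : MSC P V) : Prop :=
  μ.IsExchange ∧
  ¬ ∃ μ₁ μ₂ : MSC P V, μ₁.n ≠ 0 ∧ μ₂.n ≠ 0 ∧ μ₁.IsExchange ∧ μ₂.IsExchange ∧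
      μ.Equiv (μ₁.concat μ₂)

end MSC


/-!
Conflict-graph edges of a concatenation `μ₁ ⬝ μ₂` never lead from a message of `μ₂` back to a
message of `μ₁`: process order and matching both respect the boundary between the factors.
In a well-formed MSC every event is a send or is matched to a send of the same factor, so a
non-empty factor contains a message. Hence strong connectivity forbids any decomposition into two
non-empty factors. Applied to the given decomposition into exchanges, all factors but one are
empty and `μ` is isomorphic to the remaining exchange.
-/

namespace MSC

variable {P V : Type} {μ ν ρ μ₁ μ₂ : MSC P V}

theorem Equiv.trans (h₁ : μ.Equiv ν) (h₂ : ν.Equiv ρ) : μ.Equiv ρ := by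
  obtain ⟨f, hf_lab, hf_po, hf_src⟩ := h₁
  obtain ⟨g, hg_lab, hg_po, hg_src⟩ := h₂
  exact ⟨f.trans g, fun i => by simp [hg_lab, hf_lab], fun i j => by simp [hg_po, hf_po],
    fun i j => by simp [hg_src, hf_src]⟩

theorem equiv_of_strictMono (f : Fin μ.n ≃ Fin ν.n) (hf : StrictMono f)
    (hlab : ∀ i, ν.lab (f i) = μ.lab i) (hsrc : ∀ i j, ν.src (f i) (f j) ↔ μ.src i j) :
    μ.Equiv ν :=
  ⟨f, hlab, fun i j => by simp only [po, hf.lt_iff_lt, hlab], hsrc⟩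

theorem concat_equiv_of_n_left_eq_zero (μ₂ : MSC P V) (h : μ₁.n = 0) :
    (μ₁.concat μ₂).Equiv μ₂ := by
  have hn : (μ₁.concat μ₂).n = μ₂.n := by simp [concat, h]
  refine equiv_of_strictMono (finCongr hn) (fun _ _ => id) (fun k => ?_) (fun i j => ?_)
  · simp only [concat, h, not_lt_zero, ↓reduceDIte, tsub_zero]
    rfl
  · simp only [concat, h, not_lt_zero, IsEmpty.exists_iff, tsub_zero, zero_le, exists_true_left,
      false_or]
    rfl

theorem concat_equiv_of_n_right_eq_zero (μ₁ : MSC P V) (h : μ₂.n = 0) :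
    (μ₁.concat μ₂).Equiv μ₁ := by
  have hn : (μ₁.concat μ₂).n = μ₁.n := by simp [concat, h]
  have hlt (k : Fin (μ₁.concat μ₂).n) : k.val < μ₁.n := hn ▸ k.isLt
  refine equiv_of_strictMono (finCongr hn) (fun _ _ => id) (fun k => ?_) (fun i j => ?_)
  · simp only [concat, hlt, ↓reduceDIte]
    rfl
  · simp only [concat, hlt, exists_true_left, not_le.mpr (hlt i), IsEmpty.exists_iff, or_false]
    rfl

theorem IsExchange.of_equiv (h : μ.Equiv ν) (hν : ν.IsExchange) : μ.IsExchange := by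
  obtain ⟨f, hlab, hpo, hsrc⟩ := h
  obtain ⟨σ, hlin, hsend⟩ := hν
  have hn : μ.n = ν.n := by simpa using Fintype.card_congr f
  have hlab' (x : Fin ν.n) : μ.lab (f.symm x) = ν.lab x := by rw [← hlab, f.apply_symm_apply]
  refine ⟨(finCongr hn).trans (σ.trans f.symm), fun i j hij => ?_, fun a b hab => ?_⟩
  · exact hlin (f i) (f j) (hij.imp (hpo i j).mpr (hsrc i j).mpr)
  · simp only [_root_.Equiv.trans_apply, hlab']
    exact hsend _ _ hab

theorem isExchange_empty : (empty : MSC P V).IsExchange :=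
  ⟨_root_.Equiv.refl _, fun i => i.elim0, fun a => a.elim0⟩

def CgStronglyConnected (μ : MSC P V) : Prop :=
  ∀ v v' : Fin μ.n, (μ.lab v).isSend → (μ.lab v').isSend → Relation.ReflTransGen μ.cg v v'

theorem CgStronglyConnected.of_equiv (h : μ.Equiv ν) (hμ : μ.CgStronglyConnected) :
    ν.CgStronglyConnected := by
  obtain ⟨f, hlab, hpo, hsrc⟩ := h
  have hevAt {X v e} (hX : μ.evAt X v e) : ν.evAt X (f v) (f e) := by
    cases X with
    | S => exact ⟨congrArg f hX.1, (hlab v).symm ▸ hX.2⟩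
    | R => exact (hsrc v e).mpr hX
  have hcg {v v'} (h : μ.cg v v') : ν.cg (f v) (f v') := by
    obtain ⟨X, Y, e, e', hX, hY, hee'⟩ := h
    exact ⟨X, Y, f e, f e', hevAt hX, hevAt hY, (hpo e e').mpr hee'⟩
  intro v v' hv hv'
  have hpath := hμ (f.symm v) (f.symm v') (by rwa [← hlab, f.apply_symm_apply])
    (by rwa [← hlab, f.apply_symm_apply])
  simpa only [Function.onFun, f.apply_symm_apply] using hpath.lift f fun _ _ => hcg

theorem WF.exists_isSend_eq_or_src (hwf : μ.WF) (h : μ.Equiv ν) (j : Fin ν.n) :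
    ∃ i, (ν.lab i).isSend ∧ (i = j ∨ ν.src i j) := by
  obtain ⟨f, hlab, -, hsrc⟩ := h
  have hj : ν.lab j = μ.lab (f.symm j) := by rw [← hlab, f.apply_symm_apply]
  cases hl : μ.lab (f.symm j) with
  | send => exact ⟨j, by rw [hj, hl]; rfl, Or.inl rfl⟩
  | recv =>
    obtain ⟨i, hi⟩ := hwf.2.2.2 (f.symm j) (by rw [hl]; rfl)
    obtain ⟨-, p, q, m, hi_lab, -⟩ := hwf.1 _ _ hi
    exact ⟨f i, by rw [hlab, hi_lab]; rfl, Or.inr (by simpa using (hsrc i _).mpr hi)⟩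

theorem concat_src_lt_iff {i j : Fin (μ₁.concat μ₂).n} (h : (μ₁.concat μ₂).src i j) :
    i.val < μ₁.n ↔ j.val < μ₁.n := by
  rcases h with ⟨hi, hj, -⟩ | ⟨hi, hj, -⟩ <;> omega

theorem concat_evAt_lt_iff {X : SR} {v e : Fin (μ₁.concat μ₂).n}
    (h : (μ₁.concat μ₂).evAt X v e) : v.val < μ₁.n ↔ e.val < μ₁.n := by
  cases X with
  | S => rw [h.1]
  | R => exact concat_src_lt_iff h

theorem concat_cg_le {v v' : Fin (μ₁.concat μ₂).n} (h : (μ₁.concat μ₂).cg v v')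
    (hv : μ₁.n ≤ v.val) : μ₁.n ≤ v'.val := by
  obtain ⟨X, Y, e, e', he, he', hee', -⟩ := h
  have := concat_evAt_lt_iff he
  have := concat_evAt_lt_iff he'
  have : e.val < e'.val := hee'
  omega

theorem concat_reflTransGen_cg_le {v v' : Fin (μ₁.concat μ₂).n}
    (h : Relation.ReflTransGen (μ₁.concat μ₂).cg v v') (hv : μ₁.n ≤ v.val) : μ₁.n ≤ v'.val := by
  induction h with
  | refl => exact hv
  | tail _ hedge ih => exact concat_cg_le hedge ih

theorem WF.exists_isSend_concat_lt_iff (hwf : μ.WF) (h : μ.Equiv (μ₁.concat μ₂))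
    (j : Fin (μ₁.concat μ₂).n) :
    ∃ i, ((μ₁.concat μ₂).lab i).isSend ∧ (i.val < μ₁.n ↔ j.val < μ₁.n) := by
  obtain ⟨i, hi, rfl | hij⟩ := hwf.exists_isSend_eq_or_src h j
  · exact ⟨i, hi, Iff.rfl⟩
  · exact ⟨i, hi, concat_src_lt_iff hij⟩

theorem WF.n_eq_zero_or_n_eq_zero_of_equiv_concat (hwf : μ.WF) (hsc : μ.CgStronglyConnected)
    (h : μ.Equiv (μ₁.concat μ₂)) : μ₁.n = 0 ∨ μ₂.n = 0 := by
  by_contra! hne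
  have hn : (μ₁.concat μ₂).n = μ₁.n + μ₂.n := rfl
  obtain ⟨v₁, hv₁, hv₁_lt⟩ := hwf.exists_isSend_concat_lt_iff h ⟨0, by omega⟩
  obtain ⟨v₂, hv₂, hv₂_lt⟩ := hwf.exists_isSend_concat_lt_iff h ⟨μ₁.n, by omega⟩
  have := concat_reflTransGen_cg_le (hsc.of_equiv h v₂ v₁ hv₂ hv₁) (by simpa using hv₂_lt)
  simp only at hv₁_lt
  omega

theorem IsExchange.of_equiv_concatList (hwf : μ.WF) (hsc : μ.CgStronglyConnected)
    {l : List (MSC P V)} (hl : ∀ ν ∈ l, ν.IsExchange) (h : μ.Equiv (concatList l)) :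
    μ.IsExchange := by
  induction l with
  | nil => exact isExchange_empty.of_equiv h
  | cons ν l ih =>
    rcases hwf.n_eq_zero_or_n_eq_zero_of_equiv_concat hsc h with h₀ | h₀
    · exact ih (fun ν' hν' => hl ν' (List.mem_cons_of_mem _ hν'))
        (Equiv.trans h (concat_equiv_of_n_left_eq_zero _ h₀))
    · exact (hl ν List.mem_cons_self).of_equiv
        (Equiv.trans h (concat_equiv_of_n_right_eq_zero _ h₀))

end MSC

/-- If the conflict graph of an MSC `μ` that is a concatenation of
exchanges is strongly connected, then `μ` is a prime exchange. -/
theorem stmt1 {P V : Type} (μ : MSC P V) (hwf : μ.WF)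
    (hdec : ∃ l : List (MSC P V), (∀ ν ∈ l, MSC.WF ν ∧ MSC.IsExchange ν) ∧
      μ.Equiv (MSC.concatList l))
    (hsc : ∀ v v' : Fin μ.n, (μ.lab v).isSend → (μ.lab v').isSend →
      Relation.ReflTransGen μ.cg v v') :
    MSC.Prime μ := by
  obtain ⟨l, hl, h⟩ := hdec
  refine ⟨MSC.IsExchange.of_equiv_concatList hwf hsc (fun ν hν => (hl ν hν).2) h, ?_⟩
  rintro ⟨μ₁, μ₂, h₁, h₂, -, -, h'⟩
  exact (hwf.n_eq_zero_or_n_eq_zero_of_equiv_concat hsc h').elim h₁ h₂
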